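/- Let A be a commutative unital C*-algebra, let a, b ∈ A, define P(z) = (z - a)(z - b) and P'(z) = 2z - (a + b) for z ∈ A, and let c = (a + b)/2. Then for every z ∈ A, ‖P(z) - P(c)‖ ≤ (1/4) · ‖P'(z)‖². In particular, if ‖1‖ = 1 and z is not a critical point of P (so P'(z) ≠ 0), then, since the second derivative is P''(z) = 2·1, one has (‖P''(z)‖ / 2!) · ‖P(z) - P(c)‖ / ‖P'(z)‖² ≤ 1/4 ≤ 4^{2-1}, verifying the higher order C*-algebraic Smale mean value conjecture for k = 2 in degree 2. -/

import Mathlib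

/-!
Completing the square at the critical point `c = (a + b)/2` gives `P(z) - P(c) = (z - c)²` and
`P'(z) = 2(z - c)`, so submultiplicativity of the norm yields
`‖P(z) - P(c)‖ ≤ ‖z - c‖² = ‖P'(z)‖² / 4`.
-/

theorem sub_mul_sub_sub_sub_mul_sub_eq_sq {R : Type*} [CommRing R] {a b c : R}
    (h : a + b = c + c) (z : R) :
    (z - a) * (z - b) - (c - a) * (c - b) = (z - c) ^ 2 := by
  linear_combination (c - z) * h

theorem norm_two_mul {A : Type*} [SeminormedRing A] [NormedSpace ℝ A] (x : A) :
    ‖2 * x‖ = 2 * ‖x‖ := by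
  rw [two_mul, ← two_smul ℝ x, norm_smul, Real.norm_two]

theorem norm_sub_mul_sub_sub_sub_mul_sub_le {A : Type*} [NormedCommRing A] [NormedSpace ℝ A] {a b c : A}
    (h : a + b = c + c) (z : A) :
    ‖(z - a) * (z - b) - (c - a) * (c - b)‖ ≤ 1 / 4 * ‖2 * z - (a + b)‖ ^ 2 := by
  have hderiv : 2 * z - (a + b) = 2 * (z - c) := by rw [h]; ring
  calc ‖(z - a) * (z - b) - (c - a) * (c - b)‖ = ‖(z - c) ^ 2‖ := by
        rw [sub_mul_sub_sub_sub_mul_sub_eq_sq h]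
    _ ≤ ‖z - c‖ ^ 2 := norm_pow_le' _ two_pos
    _ = 1 / 4 * ‖2 * z - (a + b)‖ ^ 2 := by rw [hderiv, norm_two_mul]; ring

theorem degree_two_higher_order_smale_general {A : Type*} [NormedCommRing A]
    [NormedAlgebra ℂ A]
    (a b : A) (P P' P'' : A → A)
    (hP : ∀ z, P z = (z - a) * (z - b))
    (hP' : ∀ z, P' z = 2 * z - (a + b))
    (hP'' : ∀ z, P'' z = (2 : A) * 1)
    (c : A) (hc : c = (1 / 2 : ℂ) • (a + b)) (z : A) :
    ‖P z - P c‖ ≤ (1 / 4) * ‖P' z‖ ^ 2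
    ∧ (‖(1 : A)‖ = 1 → P' z ≠ 0 →
        (‖P'' z‖ / (Nat.factorial 2 : ℝ)) * ‖P z - P c‖ / ‖P' z‖ ^ 2 ≤ 1 / 4
        ∧ (1 / 4 : ℝ) ≤ 4 ^ (2 - 1)) := by
  have hmid : a + b = c + c := by
    rw [hc, one_div, ← invOf_eq_inv, ← midpoint_eq_smul_add, midpoint_add_self]
  have hbound : ‖P z - P c‖ ≤ 1 / 4 * ‖P' z‖ ^ 2 := by
    rw [hP, hP, hP']
    exact norm_sub_mul_sub_sub_sub_mul_sub_le hmid z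
  refine ⟨hbound, fun hone hcrit => ⟨?_, by norm_num⟩⟩
  have hP''z : ‖P'' z‖ = 2 := by rw [hP'', norm_two_mul, hone, mul_one]
  rw [hP''z, Nat.factorial_two, Nat.cast_two, div_self two_ne_zero, one_mul,
    div_le_iff₀ (pow_pos (norm_pos_iff.mpr hcrit) 2)]
  exact hbound

/-- **Higher order C*-algebraic Smale mean value conjecture, `k = 2`, degree 2.**
For `P(z) = (z-a)(z-b)` over a commutative unital C*-algebra, with derivative
`P'(z) = 2z - (a+b)`, second derivative `P''(z) = 2·1`, and critical point `c = (a+b)/2`,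
one has `‖P(z)-P(c)‖ ≤ (1/4) ‖P'(z)‖²` for every `z`; in particular, if `‖1‖ = 1` and `z` is
not a critical point of `P`, then `(‖P''(z)‖/2!) ‖P(z)-P(c)‖/‖P'(z)‖² ≤ 1/4 ≤ 4^{2-1}`. -/
theorem degree_two_higher_order_smale {A : Type*} [NormedCommRing A] [StarRing A]
    [CStarRing A] [CompleteSpace A] [NormedAlgebra ℂ A] [StarModule ℂ A]
    (a b : A) (P P' P'' : A → A)
    (hP : ∀ z, P z = (z - a) * (z - b))
    (hP' : ∀ z, P' z = 2 * z - (a + b))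
    (hP'' : ∀ z, P'' z = (2 : A) * 1)
    (c : A) (hc : c = (1 / 2 : ℂ) • (a + b)) (z : A) :
    ‖P z - P c‖ ≤ (1 / 4) * ‖P' z‖ ^ 2
    ∧ (‖(1 : A)‖ = 1 → P' z ≠ 0 →
        (‖P'' z‖ / (Nat.factorial 2 : ℝ)) * ‖P z - P c‖ / ‖P' z‖ ^ 2 ≤ 1 / 4
        ∧ (1 / 4 : ℝ) ≤ 4 ^ (2 - 1)) :=
  degree_two_higher_order_smale_general a b P P' P'' hP hP' hP'' c hc z
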